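/- Let h : ℝ → ℝ be continuously differentiable. If h(0) ≥ 0 and for every t with h(t) = 0 we have h'(t) > 0, then h(t) ≥ 0 for all t ≥ 0. -/

import Mathlib

theorem stmt_5 (h : ℝ → ℝ) (hC1 : ContDiff ℝ 1 h) (h0 : 0 ≤ h 0)
    (hbd : ∀ t, h t = 0 → 0 < deriv h t) :
    ∀ t, 0 ≤ t → 0 ≤ h t := by
  intro t ht
  by_contra hneg
  push_neg at hneg
  set S := {u : ℝ | u ∈ Set.Icc (0:ℝ) t ∧ 0 ≤ h u} with hSdef
  have hne : S.Nonempty := ⟨0, ⟨le_refl 0, ht⟩, h0⟩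
  have hbdd : BddAbove S := ⟨t, fun u hu => hu.1.2⟩
  set s := sSup S with hs
  have hcont : Continuous h := hC1.continuous
  have hcl : IsClosed S := isClosed_Icc.inter (isClosed_le continuous_const hcont)
  have hsS : s ∈ S := hcl.closure_subset (csSup_mem_closure hne hbdd)
  have hhs : 0 ≤ h s := hsS.2
  have hst : s < t := lt_of_le_of_ne hsS.1.2 (fun heq => absurd hhs (by rw [heq]; exact not_le.mpr hneg))
  have hub : ∀ u ∈ S, u ≤ s := fun u hu => le_csSup hbdd hu
  have hev : ∀ᶠ u in nhdsWithin s (Set.Ioi s), 0 < h u := by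
    rcases hhs.lt_or_eq with hpos | hzero
    · have : ∀ᶠ u in nhds s, 0 < h u :=
        (hcont.tendsto s).eventually (eventually_gt_nhds hpos)
      exact this.filter_mono nhdsWithin_le_nhds
    · have hz : h s = 0 := hzero.symm
      have hd : 0 < deriv h s := hbd s hz
      have hder : HasDerivAt h (deriv h s) s :=
        ((hC1.differentiable one_ne_zero) s).hasDerivAt
      have hslope : Filter.Tendsto (slope h s) (nhdsWithin s {s}ᶜ) (nhds (deriv h s)) :=
        hasDerivAt_iff_tendsto_slope.mp hder
      have hslope' : ∀ᶠ u in nhdsWithin s {s}ᶜ, 0 < slope h s u :=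
        hslope.eventually (eventually_gt_nhds hd)
      have hmono : nhdsWithin s (Set.Ioi s) ≤ nhdsWithin s {s}ᶜ :=
        nhdsWithin_mono s (fun u hu => ne_of_gt hu)
      have hev' : ∀ᶠ u in nhdsWithin s (Set.Ioi s), 0 < slope h s u :=
        hslope'.filter_mono hmono
      have hmem : ∀ᶠ u in nhdsWithin s (Set.Ioi s), u ∈ Set.Ioi s :=
        eventually_mem_nhdsWithin
      filter_upwards [hev', hmem] with u hu1 hu2
      have husub : 0 < u - s := sub_pos.mpr hu2
      rw [slope_def_field, div_pos_iff] at hu1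
      rcases hu1 with ⟨hnum, _⟩ | ⟨_, hden⟩
      · linarith
      · linarith
  have hIoc : ∀ᶠ u in nhdsWithin s (Set.Ioi s), u ∈ Set.Ioc s t :=
    Ioc_mem_nhdsGT_of_mem ⟨le_refl s, hst⟩
  obtain ⟨u, hu1, hu2⟩ := (hev.and hIoc).exists
  have : u ∈ S := ⟨⟨le_trans hsS.1.1 hu2.1.le, hu2.2⟩, hu1.le⟩
  exact absurd (hub u this) (not_le.mpr hu2.1)
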